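/- ∫₀¹ cos(2πx) · log Γ(x+1) dx = 1/4 − Si(2π)/(2π), where Si is the sine integral function. -/

import Mathlib

open MeasureTheory Real

/-- The sine integral `Si(x) = ∫₀^x (sin t)/t dt`. -/
noncomputable def Si (x : ℝ) : ℝ := ∫ t in (0:ℝ)..x, Real.sin t / t

/-!
Since `log Γ(x + 1) = log Γ(x) + log x`, the integral splits in two. Integrating `cos (2πx) log x`
by parts against `sin (2πx) / (2π)` produces `-Si(2π) / (2π)`. For the `log Γ` part, the
substitution `x ↦ 1 - x` and the reflection formula `Γ(x) Γ(1 - x) = π / sin (πx)` give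
`2 ∫₀¹ cos (2πx) log Γ(x) dx = -∫₀¹ cos (2πx) log sin (πx) dx`, and one more integration by parts
shows this is `1/2`.

The boundary terms vanish because the antiderivatives are continuous on `[0, 1]`:
`sin (bx) log x = b sinc (bx) · (x log x)` and `sin (2πx) log sin (πx) = 2 cos (πx) · (s log s)`
with `s = sin (πx)`, and `t ↦ t log t` is continuous on all of `ℝ` (as `log 0 = 0`).
-/

open intervalIntegral Set

lemma integral_congr_Ioo {E : Type*} [NormedAddCommGroup E] [NormedSpace ℝ E] {f g : ℝ → E}
    {a b : ℝ} (hab : a ≤ b) (h : EqOn f g (Ioo a b)) :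
    ∫ x in a..b, f x = ∫ x in a..b, g x := by
  rw [integral_of_le hab, integral_of_le hab, integral_Ioc_eq_integral_Ioo,
    integral_Ioc_eq_integral_Ioo, setIntegral_congr_fun measurableSet_Ioo h]

lemma sin_eq_mul_sinc (x : ℝ) : sin x = x * sinc x := by
  rcases eq_or_ne x 0 with rfl | hx
  · simp
  · rw [sinc_of_ne_zero hx, mul_div_cancel₀ _ hx]

lemma Si_eq_integral_sinc (x : ℝ) : Si x = ∫ t in 0..x, sinc t :=
  integral_congr_ae <| Filter.mem_of_superset (compl_mem_ae_iff.2 (measure_singleton (0 : ℝ)))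
    fun t (ht : t ≠ 0) _ => (sinc_of_ne_zero ht).symm

lemma hasDerivAt_Si (x : ℝ) : HasDerivAt Si (sinc x) x := by
  rw [funext Si_eq_integral_sinc]
  exact (continuous_sinc.integral_hasStrictDerivAt 0 x).hasDerivAt

@[fun_prop]
lemma continuous_Si : Continuous Si :=
  continuous_iff_continuousAt.2 fun x => (hasDerivAt_Si x).continuousAt

lemma integral_cos_mul_log {a b : ℝ} (ha : 0 ≤ a) (hb : b ≠ 0) :
    ∫ x in 0..a, cos (b * x) * log x = (sin (b * a) * log a - Si (b * a)) / b := by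
  have hsinc : ∀ x, sin (b * x) * log x = b * sinc (b * x) * (x * log x) := fun x => by
    rw [sin_eq_mul_sinc]; ring
  have hcont : Continuous fun x => (sin (b * x) * log x - Si (b * x)) / b := by
    simp_rw [hsinc]
    have := continuous_mul_log
    fun_prop
  have hderiv : ∀ x ∈ Ioo 0 a,
      HasDerivAt (fun x => (sin (b * x) * log x - Si (b * x)) / b) (cos (b * x) * log x) x := by
    intro x hx
    have hbx : HasDerivAt (fun x => b * x) b x := by simpa using (hasDerivAt_id x).const_mul b
    have h := ((hbx.sin.mul (hasDerivAt_log hx.1.ne')).sub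
      ((hasDerivAt_Si (b * x)).comp x hbx)).div_const b
    refine h.congr_deriv ?_
    rw [sinc_of_ne_zero (mul_ne_zero hb hx.1.ne')]
    field_simp
    ring
  have hint : IntervalIntegrable (fun x => cos (b * x) * log x) volume 0 a :=
    intervalIntegrable_log'.continuousOn_mul (by fun_prop)
  rw [integral_eq_sub_of_hasDerivAt_of_le ha hcont.continuousOn hderiv hint]
  simp [Si]

lemma intervalIntegrable_log_sin_pi_mul {a b : ℝ} :
    IntervalIntegrable (fun x => log (sin (π * x))) volume a b := by
  simpa [pi_ne_zero] using
    (intervalIntegrable_log_sin (a := π * a) (b := π * b)).comp_mul_left (c := π)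

lemma integral_cos_two_pi_mul_mul_log_sin_pi_mul :
    ∫ x in 0..1, cos (2 * π * x) * log (sin (π * x)) = -1 / 2 := by
  set F : ℝ → ℝ := fun x => sin (2 * π * x) * log (sin (π * x)) / (2 * π) - x / 2
    - sin (2 * π * x) / (4 * π) with hF
  have hsin_two : ∀ x, sin (2 * π * x) = 2 * sin (π * x) * cos (π * x) := fun x => by
    rw [← sin_two_mul]; ring_nf
  have hcont : Continuous F := by
    have : ∀ x, sin (2 * π * x) * log (sin (π * x))
        = 2 * cos (π * x) * (sin (π * x) * log (sin (π * x))) := fun x => by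
      rw [hsin_two]; ring
    simp_rw [hF, this]
    have := continuous_mul_log
    fun_prop
  have hderiv : ∀ x ∈ Ioo (0 : ℝ) 1, HasDerivAt F (cos (2 * π * x) * log (sin (π * x))) x := by
    intro x hx
    have hsin : sin (π * x) ≠ 0 :=
      (sin_pos_of_pos_of_lt_pi (mul_pos pi_pos hx.1) (mul_lt_of_lt_one_right pi_pos hx.2)).ne'
    have h2 : HasDerivAt (fun x => 2 * π * x) (2 * π) x := by
      simpa using (hasDerivAt_id x).const_mul (2 * π)
    have h1 : HasDerivAt (fun x => π * x) π x := by simpa using (hasDerivAt_id x).const_mul π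
    have h := (((h2.sin.mul (h1.sin.log hsin)).div_const (2 * π)).sub
      ((hasDerivAt_id x).div_const 2)).sub (h2.sin.div_const (4 * π))
    refine h.congr_deriv ?_
    have hcos_two : cos (2 * π * x) = 2 * cos (π * x) ^ 2 - 1 := by
      rw [← cos_two_mul]; ring_nf
    rw [hsin_two, hcos_two]
    field_simp
    ring
  rw [integral_eq_sub_of_hasDerivAt_of_le zero_le_one hcont.continuousOn hderiv
    (intervalIntegrable_log_sin_pi_mul.continuousOn_mul (by fun_prop))]
  norm_num [hF]

lemma log_Gamma_add_one {x : ℝ} (hx : 0 < x) : log (Gamma (x + 1)) = log (Gamma x) + log x := by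
  rw [Gamma_add_one hx.ne', log_mul hx.ne' (Gamma_pos_of_pos hx).ne', add_comm]

lemma log_Gamma_add_log_Gamma_one_sub {x : ℝ} (h0 : 0 < x) (h1 : x < 1) :
    log (Gamma x) + log (Gamma (1 - x)) = log π - log (sin (π * x)) := by
  rw [← log_mul (Gamma_pos_of_pos h0).ne' (Gamma_pos_of_pos (sub_pos.2 h1)).ne',
    Gamma_mul_Gamma_one_sub, log_div pi_ne_zero
      (sin_pos_of_pos_of_lt_pi (by positivity) (mul_lt_of_lt_one_right pi_pos h1)).ne']

lemma continuousOn_log_Gamma : ContinuousOn (fun x => log (Gamma x)) (Ioi 0) := fun x hx =>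
  ((differentiableAt_Gamma fun m => by linarith [hx.out, m.cast_nonneg (α := ℝ)]).continuousAt.log
    (Gamma_pos_of_pos hx).ne').continuousWithinAt

lemma intervalIntegrable_log_Gamma {a b : ℝ} (ha : 0 ≤ a) (hb : 0 ≤ b) :
    IntervalIntegrable (fun x => log (Gamma x)) volume a b := by
  have hshift : IntervalIntegrable (fun x => log (Gamma (x + 1))) volume a b :=
    (continuousOn_log_Gamma.comp (by fun_prop) fun x hx =>
      show (0 : ℝ) < x + 1 by linarith [le_trans (le_min ha hb) hx.1]).intervalIntegrable
  refine (hshift.sub intervalIntegrable_log').congr fun x hx => ?_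
  have : 0 < x := lt_of_le_of_lt (le_min ha hb) hx.1
  simp [log_Gamma_add_one this]

lemma integral_cos_two_pi_mul : ∫ x in (0 : ℝ)..1, cos (2 * π * x) = 0 := by
  simp [integral_comp_mul_left (fun x => cos x) (by positivity : 2 * π ≠ 0)]

lemma integral_cos_two_pi_mul_mul_log_Gamma :
    ∫ x in 0..1, cos (2 * π * x) * log (Gamma x) = 1 / 4 := by
  set f : ℝ → ℝ := fun x => cos (2 * π * x) * log (Gamma x) with hf
  have hint : IntervalIntegrable f volume 0 1 :=
    (intervalIntegrable_log_Gamma le_rfl zero_le_one).continuousOn_mul (by fun_prop)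
  have hrefl : ∫ x in 0..1, f (1 - x) = ∫ x in 0..1, f x := by
    simp [integral_comp_sub_left f 1]
  have hint_refl : IntervalIntegrable (fun x => f (1 - x)) volume 0 1 := by
    simpa using (hint.comp_sub_left 1).symm
  have hsum : EqOn (fun x => f x + f (1 - x))
      (fun x => log π * cos (2 * π * x) - cos (2 * π * x) * log (sin (π * x))) (Ioo 0 1) :=
    fun x hx => by
      simp only [hf, mul_one_sub, cos_two_pi_sub]
      rw [← mul_add, log_Gamma_add_log_Gamma_one_sub hx.1 hx.2]
      ring
  calc ∫ x in 0..1, f x = (∫ x in 0..1, (f x + f (1 - x))) / 2 := by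
        rw [integral_add hint hint_refl, hrefl]; ring
    _ = (∫ x in 0..1, (log π * cos (2 * π * x) - cos (2 * π * x) * log (sin (π * x)))) / 2 := by
        rw [integral_congr_Ioo zero_le_one hsum]
    _ = 1 / 4 := by
        rw [integral_sub ((by fun_prop : Continuous _).intervalIntegrable _ _)
          (intervalIntegrable_log_sin_pi_mul.continuousOn_mul (by fun_prop)),
          intervalIntegral.integral_const_mul, integral_cos_two_pi_mul, integral_cos_two_pi_mul_mul_log_sin_pi_mul]
        norm_num

theorem integral_cos_log_Gamma :
    ∫ x in (0:ℝ)..1, Real.cos (2 * π * x) * Real.log (Real.Gamma (x + 1)) =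
      1 / 4 - Si (2 * π) / (2 * π) := by
  have hsplit : EqOn (fun x => cos (2 * π * x) * log (Gamma (x + 1)))
      (fun x => cos (2 * π * x) * log (Gamma x) + cos (2 * π * x) * log x) (Ioo 0 1) :=
    fun x hx => by simp only [log_Gamma_add_one hx.1, mul_add]
  rw [integral_congr_Ioo zero_le_one hsplit,
    integral_add ((intervalIntegrable_log_Gamma le_rfl zero_le_one).continuousOn_mul (by fun_prop))
      (intervalIntegrable_log'.continuousOn_mul (by fun_prop)),
    integral_cos_two_pi_mul_mul_log_Gamma, integral_cos_mul_log zero_le_one (by positivity)]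
  simp [sub_eq_add_neg, neg_div]
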